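/- For every n ≥ 1, the number of Dyck paths of semilength 2n such that no peak and no valley occurs at a positive even height equals the binomial coefficient C(2n−1, n). -/
import Mathlib


/-- The height of a path (list of up/down steps, `true` = up = +1, `false` = down = −1)
after its first `k` steps. -/
def heightAt (p : List Bool) (k : ℕ) : ℤ :=
  ((p.take k).count true : ℤ) - ((p.take k).count false : ℤ)

/-- A Dyck path: all partial sums nonnegative and total sum zero. -/
def IsDyck (p : List Bool) : Prop :=
  (∀ k, 0 ≤ heightAt p k) ∧ heightAt p p.length = 0

/-- A peak at height `h`: an up-step immediately followed by a down-step,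
the height after the up-step being `h`. -/
def HasPeakAt (p : List Bool) (h : ℤ) : Prop :=
  ∃ i, p[i]? = some true ∧ p[i+1]? = some false ∧ heightAt p (i+1) = h

/-- A valley at height `h`: a down-step immediately followed by an up-step,
the height after the down-step being `h`. -/
def HasValleyAt (p : List Bool) (h : ℤ) : Prop :=
  ∃ i, p[i]? = some false ∧ p[i+1]? = some true ∧ heightAt p (i+1) = h

/-- `p` has an up-run of length `m`: a maximal block of exactly `m` consecutive up-steps. -/
def HasUpRun (p : List Bool) (m : ℕ) : Prop :=
  ∃ i, (∀ j, j < m → p[i+j]? = some true) ∧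
    (i = 0 ∨ p[i-1]? = some false) ∧
    (p[i+m]? = some false ∨ i + m = p.length)

/-- `p` has a down-run of length `m`: a maximal block of exactly `m` consecutive down-steps. -/
def HasDownRun (p : List Bool) (m : ℕ) : Prop :=
  ∃ i, (∀ j, j < m → p[i+j]? = some false) ∧
    (i = 0 ∨ p[i-1]? = some true) ∧
    (p[i+m]? = some true ∨ i + m = p.length)

/-- Generating function of the set of Dyck paths satisfying `Q`:
the coefficient of `z^n` is the number of such paths of semilength `n`. -/
noncomputable def genFun (Q : List Bool → Prop) : PowerSeries ℕ :=
  PowerSeries.mk fun n => Set.ncard {p : List Bool | p.length = 2 * n ∧ IsDyck p ∧ Q p}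

lemma heightAt_zero (p : List Bool) : heightAt p 0 = 0 := by simp [heightAt]

lemma heightAt_succ (p : List Bool) (k : ℕ) (b : Bool) (h : p[k]? = some b) :
    heightAt p (k+1) = heightAt p k + (if b then 1 else -1) := by
  have : p.take (k+1) = p.take k ++ p[k]?.toList := List.take_succ
  rw [h] at this
  simp [heightAt, this, List.count_append]
  cases b <;> simp <;> ring

lemma heightAt_stable (p : List Bool) (k : ℕ) (h : p.length ≤ k) :
    heightAt p k = heightAt p p.length := by
  simp [heightAt, List.take_of_length_le h, List.take_length]

lemma heightAt_parity (p : List Bool) (k : ℕ) (h : k ≤ p.length) :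
    (heightAt p k + k) % 2 = 0 := by
  induction k with
  | zero => simp [heightAt_zero]
  | succ k ih =>
    have hk : k < p.length := by omega
    obtain ⟨b, hb⟩ : ∃ b, p[k]? = some b := ⟨p[k], List.getElem?_eq_getElem hk⟩
    rw [heightAt_succ p k b hb]
    have := ih (by omega)
    cases b <;> simp <;> omega

-- the moves and unfolding
def mv : Option Bool → List Bool
  | some true => [true, true]
  | some false => [false, false]
  | none => [false, true]

def lvl : Option Bool → ℤ
  | some true => 1
  | some false => -1
  | none => 0

def levAt (W : List (Option Bool)) (k : ℕ) : ℤ := ((W.take k).map lvl).sum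

lemma levAt_zero (W : List (Option Bool)) : levAt W 0 = 0 := by simp [levAt]

lemma levAt_succ (W : List (Option Bool)) (k : ℕ) (x : Option Bool) (h : W[k]? = some x) :
    levAt W (k+1) = levAt W k + lvl x := by
  have ht : W.take (k+1) = W.take k ++ W[k]?.toList := List.take_succ
  rw [h] at ht
  simp [levAt, ht]

def unf (W : List (Option Bool)) : List Bool := true :: (W.flatMap mv ++ [false])

lemma mv_length (x : Option Bool) : (mv x).length = 2 := by
  rcases x with _ | b
  · rfl
  · cases b <;> rfl

lemma flatMap_mv_length (W : List (Option Bool)) : (W.flatMap mv).length = 2 * W.length := by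
  induction W with
  | nil => simp
  | cons w W ih =>
    rw [List.flatMap_cons, List.length_append, mv_length, ih, List.length_cons]
    omega

lemma unf_length (W : List (Option Bool)) : (unf W).length = 2 * W.length + 2 := by
  rw [unf, List.length_cons, List.length_append, flatMap_mv_length, List.length_singleton]

lemma flatMap_mv_get (W : List (Option Bool)) :
    ∀ i r, r < 2 → ∀ x, W[i]? = some x → (W.flatMap mv)[2*i+r]? = (mv x)[r]? := by
  induction W with
  | nil => intro i r _ x h; simp at h
  | cons w W ih =>
    intro i r hr x h
    rcases i with _ | i
    · simp only [List.getElem?_cons_zero, Option.some_inj] at h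
      subst h
      rw [List.flatMap_cons]
      rw [List.getElem?_append_left]
      · norm_num
      · rw [mv_length]; omega
    · simp only [List.getElem?_cons_succ] at h
      rw [List.flatMap_cons, List.getElem?_append_right (by rw [mv_length]; omega)]
      rw [mv_length]
      have : 2 * (i+1) + r - 2 = 2 * i + r := by omega
      rw [this]
      exact ih i r hr x h

lemma unf_get_zero (W : List (Option Bool)) : (unf W)[0]? = some true := by simp [unf]

lemma unf_get_odd (W : List (Option Bool)) (i : ℕ) (x : Option Bool) (h : W[i]? = some x) :
    (unf W)[2*i+1]? = (mv x)[0]? := by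
  have hi : i < W.length := (List.getElem?_eq_some_iff.mp h).1
  simp only [unf, show 2*i+1 = (2*i)+1 from rfl, List.getElem?_cons_succ]
  rw [List.getElem?_append_left (by rw [flatMap_mv_length]; omega)]
  have := flatMap_mv_get W i 0 (by omega) x h
  simpa using this

lemma unf_get_even (W : List (Option Bool)) (i : ℕ) (x : Option Bool) (h : W[i]? = some x) :
    (unf W)[2*i+2]? = (mv x)[1]? := by
  have hi : i < W.length := (List.getElem?_eq_some_iff.mp h).1
  simp only [unf, show 2*i+2 = (2*i+1)+1 by ring, List.getElem?_cons_succ]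
  rw [List.getElem?_append_left (by rw [flatMap_mv_length]; omega)]
  exact flatMap_mv_get W i 1 (by omega) x h

lemma unf_get_last (W : List (Option Bool)) : (unf W)[2*W.length+1]? = some false := by
  simp only [unf, show 2*W.length+1 = (2*W.length)+1 from rfl, List.getElem?_cons_succ]
  rw [List.getElem?_append_right (by rw [flatMap_mv_length])]
  have hl := flatMap_mv_length W
  rw [hl]
  simp

lemma unf_H_odd (W : List (Option Bool)) :
    ∀ i, i ≤ W.length → heightAt (unf W) (2*i+1) = 2 * levAt W i + 1 := by
  intro i
  induction i with
  | zero =>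
    intro _
    rw [show 2*0+1 = 0+1 by ring, heightAt_succ (unf W) 0 true (unf_get_zero W)]
    simp [heightAt_zero, levAt_zero]
  | succ i ih =>
    intro hle
    have hi : i < W.length := by omega
    obtain ⟨x, hx⟩ : ∃ x, W[i]? = some x := ⟨W[i], List.getElem?_eq_getElem hi⟩
    have h1 := ih (by omega)
    have e2 : 2*(i+1)+1 = (2*i+2)+1 := by ring
    have e1 : 2*i+2 = (2*i+1)+1 := by ring
    have hlev := levAt_succ W i x hx
    rcases x with _ | b
    · have g1 := unf_get_odd W i none hx
      have g2 := unf_get_even W i none hx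
      simp only [mv] at g1 g2
      rw [e2, heightAt_succ (unf W) _ true (by simpa using g2), e1,
        heightAt_succ (unf W) _ false (by simpa using g1), h1, hlev]
      simp [lvl]
      try ring
    · cases b
      · have g1 := unf_get_odd W i (some false) hx
        have g2 := unf_get_even W i (some false) hx
        simp only [mv] at g1 g2
        rw [e2, heightAt_succ (unf W) _ false (by simpa using g2), e1,
          heightAt_succ (unf W) _ false (by simpa using g1), h1, hlev]
        simp [lvl]
        try ring
      · have g1 := unf_get_odd W i (some true) hx
        have g2 := unf_get_even W i (some true) hx
        simp only [mv] at g1 g2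
        rw [e2, heightAt_succ (unf W) _ true (by simpa using g2), e1,
          heightAt_succ (unf W) _ true (by simpa using g1), h1, hlev]
        simp [lvl]
        try ring

lemma unf_H_even (W : List (Option Bool)) (i : ℕ) (x : Option Bool) (hx : W[i]? = some x) :
    heightAt (unf W) (2*i+2) = 2 * levAt W i + 1 + (if x = some true then 1 else -1) := by
  have hi : i < W.length := (List.getElem?_eq_some_iff.mp hx).1
  have h1 := unf_H_odd W i (by omega)
  have e1 : 2*i+2 = (2*i+1)+1 := by ring
  have g1 := unf_get_odd W i x hx
  rcases x with _ | b
  · simp only [mv] at g1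
    rw [e1, heightAt_succ (unf W) _ false (by simpa using g1), h1]
    simp
  · cases b
    · simp only [mv] at g1
      rw [e1, heightAt_succ (unf W) _ false (by simpa using g1), h1]
      simp
    · simp only [mv] at g1
      rw [e1, heightAt_succ (unf W) _ true (by simpa using g1), h1]
      simp

def Gr (W : List (Option Bool)) (k : ℤ) : Prop :=
  (∀ i < W.length, 0 ≤ levAt W i) ∧ (∀ i < W.length, W[i]? = some none → levAt W i = 0) ∧
    levAt W W.length = k ∧ 0 ≤ k

instance (W : List (Option Bool)) (k : ℤ) : Decidable (Gr W k) := by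
  unfold Gr; infer_instance

def NoMidTurn (p : List Bool) : Prop :=
  ∀ i a b, p[i]? = some a → p[i+1]? = some b →
    0 < heightAt p (i+1) → Even (heightAt p (i+1)) → a = b

lemma Gr_levAt_nonneg {W : List (Option Bool)} (h : Gr W 0) (i : ℕ) (hi : i ≤ W.length) :
    0 ≤ levAt W i := by
  rcases Nat.lt_or_ge i W.length with hi' | hi'
  · exact h.1 i hi'
  · have : i = W.length := by omega
    rw [this, h.2.2.1]

lemma unf_mapsto (W : List (Option Bool)) (h : Gr W 0) :
    IsDyck (unf W) ∧ NoMidTurn (unf W) := by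
  have hlast : heightAt (unf W) (2*W.length+2) = 0 := by
    rw [show 2*W.length+2 = (2*W.length+1)+1 by ring,
      heightAt_succ _ _ false (unf_get_last W), unf_H_odd W W.length (le_refl _), h.2.2.1]
    simp
  have hend : heightAt (unf W) (unf W).length = 0 := by
    rw [unf_length]; exact hlast
  constructor
  · constructor
    · intro k
      rcases Nat.lt_or_ge k (2*W.length+2+1) with hk | hk
      · -- k ≤ 2*W.length+2
        rcases Nat.eq_zero_or_pos k with rfl | hk0
        · rw [heightAt_zero]
        rcases Nat.even_or_odd k with ⟨t, ht⟩ | ⟨t, ht⟩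
        · -- k = 2t, t ≥ 1: k = 2*(t-1)+2
          obtain ⟨i, rfl⟩ : ∃ i, t = i + 1 := ⟨t-1, by omega⟩
          rcases Nat.lt_or_ge i W.length with hiW | hiW
          · obtain ⟨x, hx⟩ : ∃ x, W[i]? = some x := ⟨W[i], List.getElem?_eq_getElem hiW⟩
            rw [show k = 2*i+2 by omega, unf_H_even W i x hx]
            have := Gr_levAt_nonneg h i (le_of_lt hiW)
            rcases x with _ | b
            · simp; omega
            · cases b <;> simp <;> omega
          · have : k = 2*W.length+2 := by omega
            rw [this, hlast]
          -- done even case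
        · obtain ⟨i, hi⟩ : ∃ i, k = 2*i+1 := ⟨t, by omega⟩
          have hiW : i ≤ W.length := by omega
          rw [hi, unf_H_odd W i hiW]
          have := Gr_levAt_nonneg h i hiW
          omega
      · rw [heightAt_stable _ _ (by rw [unf_length]; omega), hend]
    · exact hend
  · intro i a b ha hb hpos heven
    have hib : i + 1 < (unf W).length := (List.getElem?_eq_some_iff.mp hb).1
    rw [unf_length] at hib
    have hpar := heightAt_parity (unf W) (i+1) (by rw [unf_length]; omega)
    have heven2 : (heightAt (unf W) (i+1)) % 2 = 0 := Int.even_iff.mp heven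
    have : (i+1) % 2 = 0 := by omega
    obtain ⟨j, hj⟩ : ∃ j, i + 1 = 2*j + 2 := ⟨(i+1)/2 - 1, by omega⟩
    have hjW : j < W.length := by omega
    obtain ⟨x, hx⟩ : ∃ x, W[j]? = some x := ⟨W[j], List.getElem?_eq_getElem hjW⟩
    have ga := unf_get_odd W j x hx
    have gb := unf_get_even W j x hx
    have hia : i = 2*j+1 := by omega
    rw [hia] at ha
    rw [hj] at hb
    rw [ga] at ha
    rw [gb] at hb
    rcases x with _ | c
    · -- flat: height is 0, contradiction with positivity
      exfalso
      have hlev0 := h.2.1 j hjW hx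
      have := unf_H_even W j none hx
      rw [hj] at hpos
      rw [this, hlev0] at hpos
      simp at hpos
    · cases c
      · simp only [mv] at ha hb
        simp at ha hb
        rw [ha, hb]
      · simp only [mv] at ha hb
        simp at ha hb
        rw [ha, hb]

lemma mv_inj {x y : Option Bool} (h : mv x = mv y) : x = y := by
  rcases x with _ | b <;> rcases y with _ | c
  · rfl
  · cases c <;> simp [mv] at h
  · cases b <;> simp [mv] at h
  · cases b <;> cases c <;> simp [mv] at h <;> rfl

lemma flatMap_mv_inj : ∀ W W' : List (Option Bool), W.flatMap mv = W'.flatMap mv → W = W' := by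
  intro W
  induction W with
  | nil =>
    intro W' h
    rcases W' with _ | ⟨w', W'⟩
    · rfl
    · exfalso
      have := congrArg List.length h
      rw [flatMap_mv_length, flatMap_mv_length] at this
      simp at this
  | cons w W ih =>
    intro W' h
    rcases W' with _ | ⟨w', W'⟩
    · exfalso
      have := congrArg List.length h
      rw [flatMap_mv_length, flatMap_mv_length] at this
      simp at this
    · rw [List.flatMap_cons, List.flatMap_cons] at h
      have hlen : (mv w).length = (mv w').length := by rw [mv_length, mv_length]
      have h1 := List.append_inj_left h hlen
      have h2 := List.append_inj_right h hlen
      rw [mv_inj h1, ih W' h2]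

lemma unf_inj : Function.Injective unf := by
  intro W W' h
  unfold unf at h
  simp only [List.cons.injEq] at h
  exact flatMap_mv_inj W W' (List.append_inj_left h.2 (by
    rw [flatMap_mv_length, flatMap_mv_length]
    have := congrArg List.length h.2
    simp only [List.length_append, flatMap_mv_length, List.length_singleton] at this
    omega))

def dec2 : Bool → Bool → Option Bool
  | true, true => some true
  | false, false => some false
  | false, true => none
  | true, false => some true

def decode (p : List Bool) (N : ℕ) : List (Option Bool) :=
  (List.range N).map (fun i => dec2 ((p[2*i+1]?).getD true) ((p[2*i+2]?).getD true))

lemma decode_length (p : List Bool) (N : ℕ) : (decode p N).length = N := by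
  simp [decode]

lemma decode_get (p : List Bool) (N i : ℕ) (hi : i < N) (a b : Bool)
    (ha : p[2*i+1]? = some a) (hb : p[2*i+2]? = some b) :
    (decode p N)[i]? = some (dec2 a b) := by
  unfold decode
  rw [List.getElem?_map]
  simp [List.getElem?_range hi, ha, hb]

lemma unf_surj (p : List Bool) (N : ℕ) (hlen : p.length = 2*N+2)
    (hd : IsDyck p) (hnt : NoMidTurn p) :
    ∃ W : List (Option Bool), W.length = N ∧ Gr W 0 ∧ unf W = p := by
  -- basic facts
  have hF0 : p[0]? = some true := by
    obtain ⟨c, hc⟩ : ∃ c, p[0]? = some c := ⟨p[0]'(by omega), List.getElem?_eq_getElem (by omega)⟩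
    cases c
    · exfalso
      have := hd.1 1
      rw [heightAt_succ p 0 false hc, heightAt_zero] at this
      simp at this
    · exact hc
  have hpar : ∀ k ≤ p.length, (heightAt p k + k) % 2 = 0 := fun k hk => heightAt_parity p k hk
  have hodd_pos : ∀ j, 2*j+1 ≤ p.length → 1 ≤ heightAt p (2*j+1) := by
    intro j hj
    have h1 := hpar (2*j+1) hj
    have h2 := hd.1 (2*j+1)
    push_cast at h1
    omega
  have hF1 : p[2*N+1]? = some false := by
    obtain ⟨c, hc⟩ : ∃ c, p[2*N+1]? = some c :=
      ⟨p[2*N+1]'(by omega), List.getElem?_eq_getElem (by omega)⟩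
    cases c
    · exact hc
    · exfalso
      have hend : heightAt p (2*N+2) = 0 := by
        have := hd.2; rw [hlen] at this; exact this
      rw [show 2*N+2 = (2*N+1)+1 by ring, heightAt_succ p _ true hc] at hend
      have := hodd_pos N (by omega)
      simp at hend
      omega
  have hsome : ∀ j < 2*N+2, ∃ c, p[j]? = some c := by
    intro j hj
    exact ⟨p[j]'(by omega), List.getElem?_eq_getElem (by omega)⟩
  -- no (true, false) pairs
  have hF2 : ∀ i < N, ∀ a b, p[2*i+1]? = some a → p[2*i+2]? = some b → (a, b) ≠ (true, false) := by
    intro i hi a b ha hb hab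
    rw [Prod.mk.injEq] at hab
    obtain ⟨rfl, rfl⟩ := hab
    have hh : heightAt p (2*i+2) = heightAt p (2*i+1) + 1 := by
      rw [show 2*i+2 = (2*i+1)+1 by ring, heightAt_succ p _ true ha]
      simp
    have hpos : 0 < heightAt p (2*i+2) := by
      have := hodd_pos i (by omega); omega
    have heven : Even (heightAt p (2*i+2)) := by
      have := hpar (2*i+2) (by omega)
      rw [Int.even_iff]
      push_cast at this
      omega
    have := hnt (2*i+1) true false ha (by rw [show (2*i+1)+1 = 2*i+2 by ring]; exact hb)
      (by rw [show (2*i+1)+1 = 2*i+2 by ring]; exact hpos)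
      (by rw [show (2*i+1)+1 = 2*i+2 by ring]; exact heven)
    simp at this
  -- valley pairs are at height 0
  have hF3 : ∀ i < N, p[2*i+1]? = some false → p[2*i+2]? = some true →
      heightAt p (2*i+2) = 0 := by
    intro i hi ha hb
    by_contra hne
    have hge : 0 ≤ heightAt p (2*i+2) := hd.1 _
    have hpos : 0 < heightAt p (2*i+2) := by omega
    have heven : Even (heightAt p (2*i+2)) := by
      have := hpar (2*i+2) (by omega)
      rw [Int.even_iff]
      push_cast at this
      omega
    have := hnt (2*i+1) false true ha (by rw [show (2*i+1)+1 = 2*i+2 by ring]; exact hb)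
      (by rw [show (2*i+1)+1 = 2*i+2 by ring]; exact hpos)
      (by rw [show (2*i+1)+1 = 2*i+2 by ring]; exact heven)
    simp at this
  have hE : unf (decode p N) = p := by
    apply List.ext_getElem?
    intro j
    rcases Nat.lt_or_ge j (2*N+2) with hj | hj
    · rcases Nat.eq_zero_or_pos j with rfl | hj0
      · rw [unf_get_zero, hF0]
      rcases Nat.even_or_odd j with ⟨t, ht⟩ | ⟨t, ht⟩
      · -- j = 2t = 2*(t-1)+2, t ≥ 1
        obtain ⟨i, rfl⟩ : ∃ i, t = i + 1 := ⟨t-1, by omega⟩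
        have hiN : i < N := by omega
        obtain ⟨a, ha⟩ := hsome (2*i+1) (by omega)
        obtain ⟨b, hb⟩ := hsome (2*i+2) (by omega)
        have hW := decode_get p N i hiN a b ha hb
        rw [show j = 2*i+2 by omega, unf_get_even _ i _ hW, hb]
        have hab := hF2 i hiN a b ha hb
        cases a <;> cases b
        · simp [dec2, mv]
        · simp [dec2, mv]
        · exact (hab rfl).elim
        · simp [dec2, mv]
      · rcases Nat.lt_or_ge t N with htN | htN
        · obtain ⟨a, ha⟩ := hsome (2*t+1) (by omega)
          obtain ⟨b, hb⟩ := hsome (2*t+2) (by omega)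
          have hW := decode_get p N t htN a b ha hb
          rw [show j = 2*t+1 by omega, unf_get_odd _ t _ hW, ha]
          have hab := hF2 t htN a b ha hb
          cases a <;> cases b
          · simp [dec2, mv]
          · simp [dec2, mv]
          · exact (hab rfl).elim
          · simp [dec2, mv]
        · have : j = 2*N+1 := by omega
          subst this
          have hdl : (decode p N).length = N := decode_length p N
          rw [show (2*N+1) = 2*(decode p N).length+1 by rw [hdl], unf_get_last, hdl]
          exact hF1.symm
    · rw [List.getElem?_eq_none (by rw [unf_length, decode_length]; omega),
        List.getElem?_eq_none (by omega)]
  have hdl : (decode p N).length = N := decode_length p N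
  refine ⟨decode p N, hdl, ⟨?_, ?_, ?_, le_refl 0⟩, hE⟩
  · intro i hi
    rw [hdl] at hi
    have h1 := unf_H_odd (decode p N) i (by omega)
    rw [hE] at h1
    have h2 := hd.1 (2*i+1)
    omega
  · intro i hi hnone
    rw [hdl] at hi
    obtain ⟨a, ha⟩ := hsome (2*i+1) (by omega)
    obtain ⟨b, hb⟩ := hsome (2*i+2) (by omega)
    have hW := decode_get p N i hi a b ha hb
    rw [hnone] at hW
    have hdec : dec2 a b = none := by
      have := Option.some_inj.mp hW
      exact this.symm
    have hab : a = false ∧ b = true := by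
      cases a <;> cases b <;> simp [dec2] at hdec <;> simp
    obtain ⟨rfl, rfl⟩ := hab
    have h0 := hF3 i hi ha hb
    have h1 := unf_H_even (decode p N) i none hnone
    rw [hE] at h1
    simp only [reduceCtorEq, if_false] at h1
    omega
  · rw [hdl]
    have h1 := unf_H_odd (decode p N) N (by omega)
    rw [hE] at h1
    have hend : heightAt p (2*N+2) = 0 := by
      have := hd.2; rw [hlen] at this; exact this
    rw [show 2*N+2 = (2*N+1)+1 by ring, heightAt_succ p _ false hF1] at hend
    simp at hend
    omega

section
variable {A : Type} [DecidableEq A]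

def lists (letters : List A) : ℕ → List (List A)
  | 0 => [[]]
  | N+1 => (lists letters N).flatMap (fun W => letters.map (fun x => W ++ [x]))

omit [DecidableEq A] in
lemma mem_lists (letters : List A) (hl : ∀ a : A, a ∈ letters) (N : ℕ) (p : List A) :
    p ∈ lists letters N ↔ p.length = N := by
  induction N generalizing p with
  | zero => simp [lists, List.length_eq_zero_iff]
  | succ N ih =>
    simp only [lists, List.mem_flatMap, List.mem_map]
    constructor
    · rintro ⟨W, hW, x, -, rfl⟩
      simp [(ih W).1 hW]
    · intro hp
      have hne : p ≠ [] := by intro h; simp [h] at hp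
      refine ⟨p.dropLast, (ih _).2 ?_, p.getLast hne, hl _, ?_⟩
      · simp [hp]
      · exact List.dropLast_append_getLast hne

omit [DecidableEq A] in
lemma nodup_lists (letters : List A) (hnd : letters.Nodup) (N : ℕ) :
    (lists letters N).Nodup := by
  induction N with
  | zero => simp [lists]
  | succ N ih =>
    rw [lists, List.nodup_flatMap]
    constructor
    · intro W _
      exact hnd.map (fun x y h => by simpa using List.append_inj_right h rfl)
    · refine ih.imp ?_
      intro W W' hne
      simp only [Function.onFun, List.disjoint_left, List.mem_map]
      rintro p ⟨x, -, rfl⟩ ⟨y, -, h⟩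
      have hlen : W.length = W'.length := by
        have := congrArg List.length h; simpa using this.symm
      exact hne (List.append_inj_left h.symm (by simp [hlen]))

omit [DecidableEq A] in
lemma ncard_eq_countP (letters : List A) (hl : ∀ a : A, a ∈ letters) (hnd : letters.Nodup)
    (N : ℕ) (P : List A → Prop) [DecidablePred P] :
    Set.ncard {p : List A | p.length = N ∧ P p} =
      (lists letters N).countP (fun p => decide (P p)) := by
  classical
  have hset : {p : List A | p.length = N ∧ P p} =
      ↑((lists letters N).filter (fun p => decide (P p))).toFinset := by
    ext p
    simp [List.mem_filter, mem_lists letters hl N p, and_comm]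
  rw [hset, Set.ncard_coe_finset, List.toFinset_card_of_nodup
    ((nodup_lists letters hnd N).filter _), List.countP_eq_length_filter]
end

lemma levAt_append (W : List (Option Bool)) (x : Option Bool) (k : ℕ) (h : k ≤ W.length) :
    levAt (W ++ [x]) k = levAt W k := by
  simp [levAt, List.take_append_of_le_length h]

lemma Gr_append (W : List (Option Bool)) (x : Option Bool) (k : ℤ) :
    Gr (W ++ [x]) k ↔ Gr W (k - lvl x) ∧ 0 ≤ k ∧ (x = none → k = 0) := by
  have hlen : (W ++ [x]).length = W.length + 1 := by simp
  have hget : ∀ i, i < W.length → (W ++ [x])[i]? = W[i]? := fun i hi =>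
    List.getElem?_append_left hi
  have hgetN : (W ++ [x])[W.length]? = some x := by
    rw [List.getElem?_append_right (le_refl _)]
    simp
  have hlevN : levAt (W ++ [x]) (W.length + 1) = levAt W W.length + lvl x := by
    rw [levAt_succ _ _ x hgetN, levAt_append _ _ _ (le_refl _)]
  constructor
  · rintro ⟨h1, h2, h3, h4⟩
    refine ⟨⟨fun i hi => by rw [← levAt_append W x i (le_of_lt hi)]; exact h1 i (by omega),
      fun i hi hx => by rw [← levAt_append W x i (le_of_lt hi)]; exact h2 i (by omega) (by rw [hget i hi]; exact hx), ?_, ?_⟩, h4, ?_⟩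
    · rw [hlen, hlevN] at h3; omega
    · have := h1 W.length (by omega)
      rw [levAt_append _ _ _ (le_refl _)] at this
      rw [hlen, hlevN] at h3
      omega
    · intro hx
      have := h2 W.length (by omega) (by rw [hgetN, hx])
      rw [levAt_append _ _ _ (le_refl _)] at this
      rw [hlen, hlevN] at h3
      rw [this] at h3
      subst hx
      simp [lvl] at h3
      omega
  · rintro ⟨⟨h1, h2, h3, h4⟩, h5, h6⟩
    refine ⟨?_, ?_, ?_, h5⟩
    · intro i hi
      rw [hlen] at hi
      rcases Nat.lt_or_ge i W.length with hi' | hi'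
      · rw [levAt_append W x i (le_of_lt hi')]; exact h1 i hi'
      · have : i = W.length := by omega
        subst this
        rw [levAt_append _ _ _ (le_refl _), h3]; omega
    · intro i hi hx
      rw [hlen] at hi
      rcases Nat.lt_or_ge i W.length with hi' | hi'
      · rw [levAt_append W x i (le_of_lt hi')]
        exact h2 i hi' (by rw [← hget i hi']; exact hx)
      · have : i = W.length := by omega
        subst this
        rw [hgetN] at hx
        have hxn : x = none := by simpa using hx
        rw [levAt_append _ _ _ (le_refl _), h3]
        have := h6 hxn
        subst hxn
        simp [lvl] at this ⊢
        omega
    · rw [hlen, hlevN, h3]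
      ring

lemma Gr_nonneg {W : List (Option Bool)} {k : ℤ} (h : Gr W k) : 0 ≤ k := h.2.2.2

lemma Gr_append_u (W : List (Option Bool)) (k : ℤ) :
    Gr (W ++ [some true]) k ↔ Gr W (k - 1) := by
  rw [Gr_append]
  simp only [lvl, reduceCtorEq, IsEmpty.forall_iff, and_true]
  constructor
  · rintro ⟨h, -⟩; exact h
  · intro h; exact ⟨h, by have := Gr_nonneg h; omega⟩

lemma Gr_append_d (W : List (Option Bool)) (k : ℤ) :
    Gr (W ++ [some false]) k ↔ Gr W (k + 1) ∧ 0 ≤ k := by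
  rw [Gr_append]
  simp only [lvl, reduceCtorEq, IsEmpty.forall_iff, and_true]
  constructor
  · rintro ⟨h, h2⟩; exact ⟨by rwa [show k - -1 = k + 1 by ring] at h, h2⟩
  · rintro ⟨h, h2⟩; exact ⟨by rwa [show k - -1 = k + 1 by ring], h2⟩

lemma Gr_append_f (W : List (Option Bool)) (k : ℤ) :
    Gr (W ++ [none]) k ↔ Gr W 0 ∧ k = 0 := by
  rw [Gr_append]
  simp only [lvl, sub_zero]
  constructor
  · rintro ⟨h, -, h3⟩
    have := h3 (by trivial)
    subst this
    exact ⟨h, rfl⟩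
  · rintro ⟨h, rfl⟩
    exact ⟨h, le_refl _, fun _ => rfl⟩

def letters3 : List (Option Bool) := [some true, some false, none]

def fc (N k : ℕ) : ℕ := (lists letters3 N).countP (fun W => decide (Gr W (k : ℤ)))

lemma countP_lists_succ (N : ℕ) (P : List (Option Bool) → Bool) :
    (lists letters3 (N+1)).countP P =
      ((lists letters3 N).map (fun W =>
        (if P (W ++ [some true]) then 1 else 0) + (if P (W ++ [some false]) then 1 else 0)
          + (if P (W ++ [none]) then 1 else 0))).sum := by
  rw [lists, List.countP_flatMap]
  congr 1
  apply List.map_congr_left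
  intro W _
  simp [letters3, List.countP_cons, Function.comp]
  rcases P (W ++ [some true]) <;> rcases P (W ++ [some false]) <;> rcases P (W ++ [none]) <;> simp

lemma sum_map_indicator (N : ℕ) (k : ℤ) :
    ((lists letters3 N).map (fun W => if Gr W k then 1 else 0)).sum
      = (lists letters3 N).countP (fun W => decide (Gr W k)) := by
  induction lists letters3 N with
  | nil => simp
  | cons W l ih =>
    simp only [List.map_cons, List.sum_cons, List.countP_cons, ih]
    rcases Classical.em (Gr W k) with h | h <;> simp [h] <;> omega

lemma sum_map_add (l : List (List (Option Bool))) (f g : List (Option Bool) → ℕ) :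
    (l.map (fun W => f W + g W)).sum = (l.map f).sum + (l.map g).sum := by
  induction l with
  | nil => simp
  | cons a l ih => simp [ih]; omega

lemma fc_succ_zero (N : ℕ) : fc (N+1) 0 = fc N 0 + fc N 1 := by
  unfold fc
  simp only [Nat.cast_zero, Nat.cast_one]
  rw [countP_lists_succ]
  have key : ∀ W : List (Option Bool),
      ((if (decide (Gr (W ++ [some true]) 0) : Bool) then 1 else 0)
        + (if (decide (Gr (W ++ [some false]) 0) : Bool) then 1 else 0)
        + (if (decide (Gr (W ++ [none]) 0) : Bool) then 1 else 0) : ℕ)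
      = (if Gr W (0:ℤ) then 1 else 0) + (if Gr W (1:ℤ) then 1 else 0) := by
    intro W
    have h1 : ¬ Gr (W ++ [some true]) (0:ℤ) := by
      rw [Gr_append_u]; intro h; have := Gr_nonneg h; omega
    have h2 : Gr (W ++ [some false]) (0:ℤ) ↔ Gr W 1 := by
      rw [Gr_append_d]; norm_num
    have h3 : Gr (W ++ [none]) (0:ℤ) ↔ Gr W 0 := by
      rw [Gr_append_f]; simp
    simp only [decide_eq_true_eq, h1, h2, h3, if_false]
    rcases Classical.em (Gr W (0:ℤ)) with h | h <;> rcases Classical.em (Gr W (1:ℤ)) with h' | h' <;>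
      simp [h, h']
  rw [List.map_congr_left (fun W _ => key W), sum_map_add, sum_map_indicator, sum_map_indicator]

lemma fc_succ_pos (N k : ℕ) : fc (N+1) (k+1) = fc N k + fc N (k+2) := by
  unfold fc
  push_cast
  rw [countP_lists_succ]
  have key : ∀ W : List (Option Bool),
      ((if (decide (Gr (W ++ [some true]) ((k:ℤ)+1)) : Bool) then 1 else 0)
        + (if (decide (Gr (W ++ [some false]) ((k:ℤ)+1)) : Bool) then 1 else 0)
        + (if (decide (Gr (W ++ [none]) ((k:ℤ)+1)) : Bool) then 1 else 0) : ℕ)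
      = (if Gr W (k:ℤ) then 1 else 0) + (if Gr W ((k:ℤ)+2) then 1 else 0) := by
    intro W
    have h1 : Gr (W ++ [some true]) ((k:ℤ)+1) ↔ Gr W (k:ℤ) := by
      rw [Gr_append_u]; norm_num
    have h2 : Gr (W ++ [some false]) ((k:ℤ)+1) ↔ Gr W ((k:ℤ)+2) := by
      rw [Gr_append_d]
      constructor
      · rintro ⟨h, -⟩; rwa [show (k:ℤ) + 1 + 1 = (k:ℤ) + 2 by ring] at h
      · intro h
        refine ⟨by rwa [show (k:ℤ) + 1 + 1 = (k:ℤ) + 2 by ring], by positivity⟩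
    have h3 : ¬ Gr (W ++ [none]) ((k:ℤ)+1) := by
      rw [Gr_append_f]; rintro ⟨-, h⟩; omega
    simp only [decide_eq_true_eq, h1, h2, h3, if_false]
    rcases Classical.em (Gr W (k:ℤ)) with h | h <;>
      rcases Classical.em (Gr W ((k:ℤ)+2)) with h' | h' <;> simp [h, h']
  rw [List.map_congr_left (fun W _ => key W), sum_map_add, sum_map_indicator, sum_map_indicator]

lemma fc_zero (k : ℕ) : fc 0 k = if k = 0 then 1 else 0 := by
  have hGr : Gr [] (k:ℤ) ↔ k = 0 := by
    unfold Gr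
    simp [levAt]
    omega
  simp [fc, lists, List.countP_cons, hGr]

lemma fc_formula : ∀ N k, fc N k = Nat.choose N ((N + k + 1)/2) := by
  intro N
  induction N with
  | zero =>
    intro k
    rw [fc_zero]
    rcases Nat.eq_zero_or_pos k with rfl | h
    · simp
    · obtain ⟨j, hj⟩ : ∃ j, (0 + k + 1)/2 = j+1 := ⟨(k+1)/2 - 1, by omega⟩
      rw [hj, Nat.choose_zero_succ]
      simp [Nat.pos_iff_ne_zero.mp h]
  | succ N ih =>
    intro k
    rcases Nat.eq_zero_or_pos k with rfl | hk
    · rw [fc_succ_zero, ih 0, ih 1]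
      rcases Nat.even_or_odd N with ⟨t, ht⟩ | ⟨t, ht⟩ <;> subst ht
      · have e1 : (t + t + 0 + 1)/2 = t := by omega
        have e2 : (t + t + 1 + 1)/2 = t + 1 := by omega
        have e3 : (t + t + 1 + 0 + 1)/2 = t + 1 := by omega
        simp only [e1, e2, e3]
        have pascal := Nat.choose_succ_succ' (t+t) t
        have harg : t + t + 1 = (t + t) + 1 := rfl
        omega
      · have e1 : (2*t + 1 + 0 + 1)/2 = t + 1 := by omega
        have e2 : (2*t + 1 + 1 + 1)/2 = t + 1 := by omega
        have e3 : (2*t + 1 + 1 + 0 + 1)/2 = t + 1 := by omega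
        simp only [e1, e2, e3]
        have pascal : (2*t + 1 + 1).choose (t+1) = (2*t+1).choose t + (2*t+1).choose (t+1) :=
          Nat.choose_succ_succ' (2*t+1) t
        have symm : (2*t+1).choose t = (2*t+1).choose (t+1) := by
          rw [← Nat.choose_symm (by omega : t ≤ 2*t+1)]
          congr 1
          omega
        omega
    · obtain ⟨k, rfl⟩ : ∃ k', k = k' + 1 := ⟨k - 1, by omega⟩
      rw [fc_succ_pos, ih k, ih (k+2)]
      rcases Nat.even_or_odd (N + k) with ⟨s, hs⟩ | ⟨s, hs⟩
      · have e1 : (N + k + 1)/2 = s := by omega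
        have e2 : (N + (k+2) + 1)/2 = s + 1 := by omega
        have e3 : (N + 1 + (k+1) + 1)/2 = s + 1 := by omega
        simp only [e1, e2, e3]
        have pascal : (N+1).choose (s+1) = N.choose s + N.choose (s+1) :=
          Nat.choose_succ_succ' N s
        omega
      · have e1 : (N + k + 1)/2 = s + 1 := by omega
        have e2 : (N + (k+2) + 1)/2 = s + 2 := by omega
        have e3 : (N + 1 + (k+1) + 1)/2 = s + 2 := by omega
        simp only [e1, e2, e3]
        have pascal : (N+1).choose (s+2) = N.choose (s+1) + N.choose (s+2) :=
          Nat.choose_succ_succ' N (s+1)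
        omega



lemma cond_iff_noMidTurn (p : List Bool) :
    (∀ h : ℤ, 0 < h → Even h → ¬ HasPeakAt p h ∧ ¬ HasValleyAt p h) ↔ NoMidTurn p := by
  constructor
  · intro H i a b ha hb hpos heven
    by_contra hne
    cases a <;> cases b
    · exact hne rfl
    · exact (H _ hpos heven).2 ⟨i, ha, hb, rfl⟩
    · exact (H _ hpos heven).1 ⟨i, ha, hb, rfl⟩
    · exact hne rfl
  · intro H h hpos heven
    constructor
    · rintro ⟨i, ha, hb, hh⟩
      rw [← hh] at hpos heven
      have := H i true false ha hb hpos heven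
      simp at this
    · rintro ⟨i, ha, hb, hh⟩
      rw [← hh] at hpos heven
      have := H i false true ha hb hpos heven
      simp at this

lemma letters3_mem : ∀ a : Option Bool, a ∈ letters3 := by
  intro a
  rcases a with _ | b
  · simp [letters3]
  · cases b <;> simp [letters3]

lemma letters3_nodup : letters3.Nodup := by decide

/-- For `n ≥ 1`, the number of Dyck paths of semilength `2n` such that no peak and no valley
occurs at a positive even height equals `C(2n−1, n)`. -/
theorem stmt8 (n : ℕ) (hn : 1 ≤ n) :
    Set.ncard {p : List Bool | p.length = 2 * (2 * n) ∧ IsDyck p ∧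
        (∀ h : ℤ, 0 < h → Even h → ¬ HasPeakAt p h ∧ ¬ HasValleyAt p h)} =
      Nat.choose (2 * n - 1) n := by
  set N := 2 * n - 1 with hN
  have hset : {p : List Bool | p.length = 2 * (2 * n) ∧ IsDyck p ∧
      (∀ h : ℤ, 0 < h → Even h → ¬ HasPeakAt p h ∧ ¬ HasValleyAt p h)}
      = {p : List Bool | p.length = 2*N+2 ∧ (IsDyck p ∧ NoMidTurn p)} := by
    ext p
    simp only [Set.mem_setOf_eq, cond_iff_noMidTurn, and_assoc]
    constructor
    · rintro ⟨h1, h2, h3⟩; exact ⟨by omega, h2, h3⟩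
    · rintro ⟨h1, h2, h3⟩; exact ⟨by omega, h2, h3⟩
  have himg : unf '' {W : List (Option Bool) | W.length = N ∧ Gr W 0}
      = {p : List Bool | p.length = 2*N+2 ∧ (IsDyck p ∧ NoMidTurn p)} := by
    ext p
    constructor
    · rintro ⟨W, ⟨hWl, hWg⟩, rfl⟩
      refine ⟨by rw [unf_length, hWl], unf_mapsto W hWg⟩
    · rintro ⟨h1, h2, h3⟩
      obtain ⟨W, hWl, hWg, hWe⟩ := unf_surj p N h1 h2 h3
      exact ⟨W, ⟨hWl, hWg⟩, hWe⟩
  have hcard : Set.ncard {W : List (Option Bool) | W.length = N ∧ Gr W 0} = fc N 0 := by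
    rw [ncard_eq_countP letters3 letters3_mem letters3_nodup N (fun W => Gr W 0)]
    unfold fc
    norm_num
  rw [hset, ← himg, Set.ncard_image_of_injOn (Function.Injective.injOn unf_inj), hcard,
    fc_formula]
  congr 1
  omega
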